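/- arXiv:math/0002119 — 3 statements merged into one kernel-verified Lean document; each statement's English description precedes it below -/
import Mathlib

section
/- Let N = (X, T, F, w) be a Petri net, let M be a marking, and let t be a transition that is enabled at M. Let M' be the marking obtained by firing t at M. Then there exists a monomial u ∈ X^Δ (a power product of the places) such that pol(M) = u · l_t and pol(M') = u · r_t, where pol(t) = l_t − r_t; consequently pol(M) − pol(M') = u · pol(t) in ℚ[X]. -/
open MvPolynomial Finset

/-- A Petri net on a set `X` of places and a set `T` of transitions.
`pre x t` is the weight `w(x,t)` of the edge from place `x` to transition `t`,
and `post t x` is the weight `w(t,x)` (weights are `0` off the flow relation). -/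
structure PetriNet (X T : Type*) where
  pre : X → T → ℕ
  post : T → X → ℕ

/-- A transition `t` is enabled at a marking `M` if every place `x` holds
at least `w(x,t)` tokens. -/
def PetriNet.enabled {X T : Type*} (N : PetriNet X T) (t : T) (M : X → ℕ) : Prop :=
  ∀ x, N.pre x t ≤ M x

/-- Firing transition `t` at marking `M` removes `w(x,t)` tokens from each place
and adds `w(t,x)` tokens to each place. -/
def PetriNet.fire {X T : Type*} (N : PetriNet X T) (t : T) (M : X → ℕ) : X → ℕ :=
  fun x => M x - N.pre x t + N.post t x

/-- `M'` is reachable from `M` if some finite sequence of firings of enabled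
transitions transforms `M` into `M'`. -/
def PetriNet.Reachable {X T : Type*} (N : PetriNet X T) : (X → ℕ) → (X → ℕ) → Prop :=
  Relation.ReflTransGen (fun M M' => ∃ t, N.enabled t M ∧ M' = N.fire t M)

/-- The polynomial `pol(M) = ∏ x^(M x)` associated to a marking. -/
noncomputable def polM {X : Type*} [Fintype X] (M : X → ℕ) : MvPolynomial X ℚ :=
  ∏ x, (MvPolynomial.X x : MvPolynomial X ℚ) ^ M x

/-- The monomial `l_t = ∏ x^(w(x,t))` of the inputs of a transition. -/
noncomputable def polIn {X T : Type*} [Fintype X] (N : PetriNet X T) (t : T) :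
    MvPolynomial X ℚ :=
  ∏ x, (MvPolynomial.X x : MvPolynomial X ℚ) ^ N.pre x t

/-- The monomial `r_t = ∏ x^(w(t,x))` of the outputs of a transition. -/
noncomputable def polOut {X T : Type*} [Fintype X] (N : PetriNet X T) (t : T) :
    MvPolynomial X ℚ :=
  ∏ x, (MvPolynomial.X x : MvPolynomial X ℚ) ^ N.post t x

/-- The polynomial `pol(t) = l_t - r_t` associated to a transition. -/
noncomputable def polT {X T : Type*} [Fintype X] (N : PetriNet X T) (t : T) :
    MvPolynomial X ℚ :=
  polIn N t - polOut N t

/-! The power product `u` is the marking `M - w(·,t)` that stays untouched by the firing: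
`M = u + w(·,t)` because `t` is enabled, `M' = u + w(t,·)` by the firing rule, and `pol` turns
sums of markings into products of power products. -/

theorem polM_add {X : Type*} [Fintype X] (a b : X → ℕ) : polM (a + b) = polM a * polM b := by
  simp only [polM, Pi.add_apply, pow_add, prod_mul_distrib]

theorem monomial_equivFunOnFinite_symm_one {X : Type*} [Fintype X] (a : X → ℕ) :
    monomial (Finsupp.equivFunOnFinite.symm a) (1 : ℚ) = polM a := by
  rw [monomial_eq, map_one, one_mul, Finsupp.prod_fintype _ _ fun _ => pow_zero _]
  rfl

namespace PetriNet

variable {X T : Type*} (N : PetriNet X T) (t : T) (M : X → ℕ)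

theorem fire_eq_add : N.fire t M = (M - (N.pre · t)) + N.post t := rfl

theorem eq_sub_add_of_enabled (h : N.enabled t M) : M = (M - (N.pre · t)) + (N.pre · t) :=
  (tsub_add_cancel_of_le h).symm

theorem polIn_eq_polM [Fintype X] : polIn N t = polM (N.pre · t) := rfl

theorem polOut_eq_polM [Fintype X] : polOut N t = polM (N.post t) := rfl

end PetriNet

/-- if `t` is enabled at `M` and `M'` results from firing `t` at `M`,
then there is a power product `u` with `pol(M) = u·l_t`, `pol(M') = u·r_t`, and
consequently `pol(M) - pol(M') = u·pol(t)` in `ℚ[X]`. -/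
theorem firing_polynomial {X T : Type*} [Fintype X] (N : PetriNet X T)
    (M M' : X → ℕ) (t : T) (henabled : N.enabled t M) (hfire : M' = N.fire t M) :
    ∃ u : X →₀ ℕ,
      polM M = (monomial u (1 : ℚ)) * polIn N t ∧
      polM M' = (monomial u (1 : ℚ)) * polOut N t ∧
      polM M - polM M' = (monomial u (1 : ℚ)) * polT N t := by
  refine ⟨Finsupp.equivFunOnFinite.symm (M - (N.pre · t)), ?_⟩
  rw [monomial_equivFunOnFinite_symm_one]
  have hM : polM M = polM (M - (N.pre · t)) * polIn N t := by
    rw [N.polIn_eq_polM, ← polM_add, ← N.eq_sub_add_of_enabled t M henabled]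
  have hM' : polM M' = polM (M - (N.pre · t)) * polOut N t := by
    rw [hfire, N.polOut_eq_polM, ← polM_add, N.fire_eq_add]
  exact ⟨hM, hM', by rw [hM, hM', polT, mul_sub]⟩
end

section
/- (Reachability and Equivalence of Polynomials) Let N = (X, T, F, w) be a reversible Petri net with initial marking M₀, and define P := {pol(t) : t ∈ T} ⊆ ℚ[X]. Then a marking M is reachable from M₀ in N if and only if pol(M₀) =_P pol(M), i.e. if and only if pol(M₀) − pol(M) lies in the ideal of ℚ[X] generated by P. -/
open MvPolynomial Finset

/-!
Firing `t` at `M` multiplies `pol(M)` by `r_t / l_t`, so `pol(M) - pol(fire t M)` is a multiple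
of `pol(t)`; hence reachable markings are equivalent. Conversely, send every monomial `pol(M)`
to the class of `M` in the quotient of the monoid of markings by any additive congruence
identifying the input and output vectors of each transition. This ring map kills each `pol(t)`,
so equivalent markings are congruent. In a reversible net reachability is such a congruence:
it is an equivalence, and firing commutes with adding tokens.
-/

namespace PetriNet

variable {X T : Type*} (N : PetriNet X T)

theorem fire_add {t : T} {M : X → ℕ} (ht : N.enabled t M) (D : X → ℕ) :
    N.fire t (M + D) = N.fire t M + D := by
  funext x
  have := ht x
  simp only [fire, Pi.add_apply]
  omega

theorem Reachable.add_right {M M' : X → ℕ} (h : N.Reachable M M') (D : X → ℕ) :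
    N.Reachable (M + D) (M' + D) := by
  induction h with
  | refl => exact .refl
  | tail _ hstep ih =>
    obtain ⟨t, ht, rfl⟩ := hstep
    refine ih.tail ⟨t, fun x => (ht x).trans (Nat.le_add_right _ _), ?_⟩
    rw [N.fire_add ht]

theorem Reachable.add {M₁ M₁' M₂ M₂' : X → ℕ} (h₁ : N.Reachable M₁ M₁')
    (h₂ : N.Reachable M₂ M₂') : N.Reachable (M₁ + M₂) (M₁' + M₂') := by
  have h₂' := Reachable.add_right N h₂ M₁'
  rw [add_comm M₂, add_comm M₂'] at h₂'
  exact (Reachable.add_right N h₁ M₂).trans h₂'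

theorem reachable_pre_post (t : T) : N.Reachable (fun x => N.pre x t) (N.post t) :=
  .single ⟨t, fun _ => le_rfl, by funext x; simp [fire]⟩

def reachableCon (hrev : ∀ M M' : X → ℕ, N.Reachable M M' → N.Reachable M' M) :
    AddCon (X → ℕ) where
  r := N.Reachable
  iseqv := ⟨fun _ => .refl, hrev _ _, .trans⟩
  add' := Reachable.add N

end PetriNet

section Polynomials

variable {X T : Type*} [Fintype X] (N : PetriNet X T)

theorem polM_eq_monomial (M : X → ℕ) :
    polM M = monomial (Finsupp.equivFunOnFinite.symm M) 1 := by
  rw [monomial_eq, map_one, one_mul, Finsupp.prod_fintype _ _ fun _ => pow_zero _]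
  rfl

theorem polM_sub_polM_fire_mem_span {M : X → ℕ} {t : T} (ht : N.enabled t M) :
    polM M - polM (N.fire t M) ∈ Ideal.span (Set.range (polT N)) := by
  set R : X → ℕ := fun x => M x - N.pre x t
  have hM : polM M = polM R * polIn N t := by
    rw [polM, polM, polIn, ← prod_mul_distrib]
    refine prod_congr rfl fun x _ => ?_
    rw [← pow_add, Nat.sub_add_cancel (ht x)]
  have hfire : polM (N.fire t M) = polM R * polOut N t := by
    rw [polM, polM, polOut, ← prod_mul_distrib]
    exact prod_congr rfl fun x _ => pow_add _ _ _
  rw [hM, hfire, ← mul_sub]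
  exact Ideal.mul_mem_left _ _ (Ideal.subset_span ⟨t, rfl⟩)

theorem PetriNet.Reachable.polM_sub_mem_span {M₀ M : X → ℕ} (h : N.Reachable M₀ M) :
    polM M₀ - polM M ∈ Ideal.span (Set.range (polT N)) := by
  induction h with
  | refl => simp
  | tail _ hstep ih =>
    obtain ⟨t, ht, rfl⟩ := hstep
    simpa using add_mem ih (polM_sub_polM_fire_mem_span N ht)

theorem AddCon.rel_of_polM_sub_mem_span (c : AddCon (X → ℕ))
    (hc : ∀ t, c (fun x => N.pre x t) (N.post t)) {M₀ M : X → ℕ}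
    (h : polM M₀ - polM M ∈ Ideal.span (Set.range (polT N))) : c M₀ M := by
  let φ := AddMonoidAlgebra.mapDomainRingHom ℚ (c.mk'.comp Finsupp.coeFnAddHom)
  have φ_polM (M : X → ℕ) : φ (polM M) = AddMonoidAlgebra.single (M : c.Quotient) 1 := by
    rw [polM_eq_monomial, ← single_eq_monomial]
    exact AddMonoidAlgebra.mapDomain_single
  have hker : Ideal.span (Set.range (polT N)) ≤ RingHom.ker φ := by
    rw [Ideal.span_le]
    rintro _ ⟨t, rfl⟩
    change φ (polM _ - polM _) = 0
    rw [map_sub, φ_polM, φ_polM, (AddCon.eq c).2 (hc t), sub_self]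
  have hφ : φ (polM M₀ - polM M) = 0 := hker h
  rw [map_sub, φ_polM, φ_polM, sub_eq_zero,
    AddMonoidAlgebra.single_left_inj one_ne_zero] at hφ
  exact (AddCon.eq c).1 hφ

end Polynomials

/-- Reachability and Equivalence of Polynomials: in a reversible
Petri net with initial marking `M₀`, a marking `M` is reachable from `M₀` if and
only if `pol(M₀) - pol(M)` lies in the ideal generated by `P = {pol(t) : t ∈ T}`. -/
theorem reachable_iff_polynomial_equiv {X T : Type*} [Fintype X] (N : PetriNet X T)
    (hrev : ∀ M M' : X → ℕ, N.Reachable M M' → N.Reachable M' M)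
    (M₀ M : X → ℕ) :
    N.Reachable M₀ M ↔ polM M₀ - polM M ∈ Ideal.span (Set.range (polT N)) :=
  ⟨PetriNet.Reachable.polM_sub_mem_span N,
    (N.reachableCon hrev).rel_of_polM_sub_mem_span N N.reachable_pre_post⟩
end

section
/- Let N = (X, T, F, w) be a reversible Petri net with initial marking M₀ and P := {pol(t) : t ∈ T}. If M is a marking such that pol(M₀) − pol(M) lies in the ideal of ℚ[X] generated by P, then M is reachable from M₀ in N. -/
open MvPolynomial Finset

/-!
Send a monomial `∏ x ^ f x` to the basis element of the class of `f` in the monoid algebra of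
`(X → ℕ) ⧸ c`, for an additive congruence `c`. If `c` identifies the input and output vector of
every transition, this algebra map kills the ideal generated by the `pol(t)`, so
`pol(M₀) - pol(M)` in that ideal forces `M₀` and `M` into the same class. In a reversible net,
mutual reachability is such a congruence: it is additive because firing commutes with adding
tokens, and each transition relates its input vector to its output vector in one step.
-/

namespace PetriNet

variable {X T : Type*} (N : PetriNet X T)

theorem Reachable.add_right_s5 {a b : X → ℕ} (h : N.Reachable a b) (c : X → ℕ) :
    N.Reachable (a + c) (b + c) := by
  induction h with
  | refl => exact .refl
  | tail _ hstep ih =>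
    obtain ⟨t, ht, rfl⟩ := hstep
    refine ih.tail ⟨t, fun x => (ht x).trans (Nat.le_add_right _ _), funext fun x => ?_⟩
    have := ht x
    simp only [PetriNet.fire, Pi.add_apply]
    omega

theorem Reachable.add_s5 {a b c d : X → ℕ} (hab : N.Reachable a b) (hcd : N.Reachable c d) :
    N.Reachable (a + c) (b + d) := by
  refine (hab.add_right_s5 N c).trans ?_
  rw [add_comm b, add_comm b]
  exact hcd.add_right_s5 N b

def mutualReachCon : AddCon (X → ℕ) where
  r a b := N.Reachable a b ∧ N.Reachable b a
  iseqv := ⟨fun _ => ⟨.refl, .refl⟩, fun h => ⟨h.2, h.1⟩,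
    fun h h' => ⟨h.1.trans h'.1, h'.2.trans h.2⟩⟩
  add' h h' := ⟨h.1.add_s5 N h'.1, h.2.add_s5 N h'.2⟩

end PetriNet

section MonomialQuotient

open AddMonoidAlgebra

variable {σ R : Type*} [Fintype σ] [DecidableEq σ] [CommRing R]

noncomputable def AddCon.monomialEval (c : AddCon (σ → ℕ)) :
    MvPolynomial σ R →ₐ[R] AddMonoidAlgebra R c.Quotient :=
  aeval fun x => single (c.mk' (Pi.single x 1)) 1

theorem AddCon.monomialEval_prod_X_pow (c : AddCon (σ → ℕ)) (f : σ → ℕ) :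
    c.monomialEval (∏ x, (X x : MvPolynomial σ R) ^ f x) = single (f : c.Quotient) 1 := by
  rw [← c.coe_mk']
  simp only [map_prod, map_pow, AddCon.monomialEval, aeval_X, single_pow, one_pow,
    prod_single, prod_const_one, ← map_nsmul, ← map_sum]
  congr 2
  simp_rw [← Pi.single_smul, smul_eq_mul, mul_one]
  exact Finset.univ_sum_single f

theorem AddCon.rel_of_sub_mem_span [Nontrivial R] {ι : Type*} (c : AddCon (σ → ℕ))
    (l r : ι → σ → ℕ) (hlr : ∀ i, c (l i) (r i)) {a b : σ → ℕ}
    (h : ∏ x, (X x : MvPolynomial σ R) ^ a x - ∏ x, X x ^ b x ∈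
      Ideal.span (Set.range fun i => ∏ x, (X x : MvPolynomial σ R) ^ l i x - ∏ x, X x ^ r i x)) :
    c a b := by
  refine c.eq.mp <| (single_left_inj (one_ne_zero (α := R))).mp <| sub_eq_zero.mp ?_
  rw [← monomialEval_prod_X_pow, ← monomialEval_prod_X_pow, ← map_sub]
  refine (Ideal.span_le (I := RingHom.ker c.monomialEval)).mpr ?_ h
  rintro _ ⟨i, rfl⟩
  rw [SetLike.mem_coe, RingHom.mem_ker, map_sub, monomialEval_prod_X_pow, monomialEval_prod_X_pow,
    c.eq.mpr (hlr i), sub_self]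

end MonomialQuotient

/-- in a reversible Petri net, if `pol(M₀) - pol(M)` lies in the
ideal of `ℚ[X]` generated by `P = {pol(t) : t ∈ T}`, then `M` is reachable
from `M₀`. -/
theorem polynomial_equiv_reachable {X T : Type*} [Fintype X] (N : PetriNet X T)
    (hrev : ∀ M M' : X → ℕ, N.Reachable M M' → N.Reachable M' M)
    (M₀ M : X → ℕ)
    (h : polM M₀ - polM M ∈ Ideal.span (Set.range (polT N))) :
    N.Reachable M₀ M := by
  have hstep : ∀ t, N.Reachable (N.pre · t) (N.post t) := fun t =>
    .single ⟨t, fun _ => le_rfl, funext fun x => by simp [PetriNet.fire]⟩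
  classical
  exact (N.mutualReachCon.rel_of_sub_mem_span (fun t x => N.pre x t) N.post
    (fun t => ⟨hstep t, hrev _ _ (hstep t)⟩) h).1
end
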